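/- arXiv:1201.2160 — 4 statements merged into one kernel-verified Lean document; each statement's English description precedes it below -/
import Mathlib

section
/- Let μ¹ and μ² be probability measures on A × X, where X = {0,...,K}^ℤ with the product partial order and A is a compact metric space. The following are equivalent: (i) for every bounded measurable local function f on A × X such that f(α,·) is nondecreasing for all α, ∫ f dμ¹ ≤ ∫ f dμ²; (ii) μ¹ and μ² have a common α-marginal Q, and μ¹(dη|α) ≤ μ²(dη|α) stochastically for Q-a.e. α. -/
open MeasureTheory ProbabilityTheory

/-- Particle configurations with at most `K` particles per site. -/
abbrev Config (K : ℕ) := ℤ → Fin (K + 1)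

/-- A function on `A × X` is local if it depends on the configuration only
through finitely many sites. -/
def IsLocalFn {A : Type*} {K : ℕ} (f : A × Config K → ℝ) : Prop :=
  ∃ Λ : Finset ℤ, ∀ (α : A) (η η' : Config K),
    (∀ x ∈ Λ, η x = η' x) → f (α, η) = f (α, η')


/-!
(ii) ⇒ (i) is Fubini for the two disintegrations. For (i) ⇒ (ii), testing (i) against
indicators of `s ×ˢ S`, with `s ⊆ A` measurable and `S` an upper cylinder set, shows that the
`A`-marginals agree (take `S = X`) and that the conditional kernels satisfy `κ₁ α S ≤ κ₂ α S`
for a.e. `α`; as there are only countably many cylinder sets, this holds simultaneously for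
a.e. `α`. By inner regularity, a measurable upper set `U` is approximated from inside by closed
sets `F`, and by compactness of `X` the upper cylinder sets generated by the restrictions of `F`
to finite windows decrease to a subset of the upper closure of `F`, which lies in `U`. So the
inequality extends to all measurable upper sets, and then to bounded monotone functions by the
layer-cake formula.
-/

open Set Filter

lemma Finset.monotone_restrict {ι : Type*} {π : ι → Type*} [∀ i, Preorder (π i)]
    (s : Finset ι) : Monotone (s.restrict (π := π)) :=
  fun _ _ h x => h x

section UpperSets

variable {α : Type*} [MeasurableSpace α] [Preorder α] {ν₁ ν₂ : Measure α}

lemma lintegral_ofReal_le_of_measure_upperSet_le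
    (h : ∀ U, MeasurableSet U → IsUpperSet U → ν₁ U ≤ ν₂ U)
    {g : α → ℝ} (hg : Measurable g) (hg_nonneg : 0 ≤ g) (hg_mono : Monotone g) :
    ∫⁻ x, ENNReal.ofReal (g x) ∂ν₁ ≤ ∫⁻ x, ENNReal.ofReal (g x) ∂ν₂ := by
  rw [lintegral_eq_lintegral_meas_lt ν₁ (ae_of_all _ hg_nonneg) hg.aemeasurable,
    lintegral_eq_lintegral_meas_lt ν₂ (ae_of_all _ hg_nonneg) hg.aemeasurable]
  exact lintegral_mono fun t => h _ (measurableSet_lt measurable_const hg)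
    fun x y hxy (hx : t < g x) => hx.trans_le (hg_mono hxy)

lemma integral_le_of_measure_upperSet_le [IsProbabilityMeasure ν₁] [IsProbabilityMeasure ν₂]
    (h : ∀ U, MeasurableSet U → IsUpperSet U → ν₁ U ≤ ν₂ U)
    {g : α → ℝ} (hg : Measurable g) (hg_bdd : ∃ C, ∀ x, |g x| ≤ C) (hg_mono : Monotone g) :
    ∫ x, g x ∂ν₁ ≤ ∫ x, g x ∂ν₂ := by
  obtain ⟨C, hC⟩ := hg_bdd
  have hg_int : ∀ (ν : Measure α) [IsFiniteMeasure ν], Integrable g ν :=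
    fun ν _ => .of_bound hg.aestronglyMeasurable C (ae_of_all _ hC)
  have hg_shift_int : ∀ (ν : Measure α) [IsFiniteMeasure ν], Integrable (fun x => g x + C) ν :=
    fun ν _ => (hg_int ν).add (integrable_const C)
  have hg_shift_nonneg : 0 ≤ fun x => g x + C := fun x => by
    change 0 ≤ g x + C
    linarith [neg_abs_le (g x), hC x]
  suffices ∫ x, g x + C ∂ν₁ ≤ ∫ x, g x + C ∂ν₂ by
    simpa [integral_add (hg_int _) (integrable_const C)] using this
  rw [integral_eq_lintegral_of_nonneg_ae (ae_of_all _ hg_shift_nonneg) (hg_shift_int ν₁).1,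
    integral_eq_lintegral_of_nonneg_ae (ae_of_all _ hg_shift_nonneg) (hg_shift_int ν₂).1]
  exact ENNReal.toReal_mono (hg_shift_int ν₂).lintegral_lt_top.ne
    (lintegral_ofReal_le_of_measure_upperSet_le h (hg.add_const C) hg_shift_nonneg
      (hg_mono.add_const C))

end UpperSets

lemma integral_compProd_le_integral_compProd {β Ω : Type*} [MeasurableSpace β]
    [MeasurableSpace Ω] {ρ : Measure β} [SFinite ρ] {κ₁ κ₂ : Kernel β Ω}
    [IsSFiniteKernel κ₁] [IsSFiniteKernel κ₂] {f : β × Ω → ℝ}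
    (hf₁ : Integrable f (ρ ⊗ₘ κ₁)) (hf₂ : Integrable f (ρ ⊗ₘ κ₂))
    (h : ∀ᵐ b ∂ρ, ∫ ω, f (b, ω) ∂κ₁ b ≤ ∫ ω, f (b, ω) ∂κ₂ b) :
    ∫ p, f p ∂(ρ ⊗ₘ κ₁) ≤ ∫ p, f p ∂(ρ ⊗ₘ κ₂) := by
  rw [Measure.integral_compProd hf₁, Measure.integral_compProd hf₂]
  exact integral_mono_ae hf₁.integral_compProd hf₂.integral_compProd h

lemma ae_condKernel_le_of_measure_prod_le {β Ω : Type*} [MeasurableSpace β]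
    [MeasurableSpace Ω] [StandardBorelSpace Ω] [Nonempty Ω]
    {ρ₁ ρ₂ : Measure (β × Ω)} [IsFiniteMeasure ρ₁] [IsFiniteMeasure ρ₂] (hfst : ρ₁.fst = ρ₂.fst)
    {t : Set Ω} (ht : MeasurableSet t) (h : ∀ s, MeasurableSet s → ρ₁ (s ×ˢ t) ≤ ρ₂ (s ×ˢ t)) :
    ∀ᵐ b ∂ρ₁.fst, ρ₁.condKernel b t ≤ ρ₂.condKernel b t := by
  refine ae_le_of_forall_setLIntegral_le_of_sigmaFinite (Kernel.measurable_coe _ ht)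
    fun s hs _ => ?_
  rw [Measure.setLIntegral_condKernel_eq_measure_prod hs ht, hfst,
    Measure.setLIntegral_condKernel_eq_measure_prod hs ht]
  exact h s hs

section Config

variable {K : ℕ}

lemma measurableSet_restrict_preimage (Λ : Finset ℤ) (T : Set (Λ → Fin (K + 1))) :
    MeasurableSet (Λ.restrict ⁻¹' T : Set (Config K)) :=
  T.to_countable.measurableSet.preimage (Finset.measurable_restrict Λ)

lemma iInter_restrict_preimage_upperClosure_subset {F : Set (Config K)} (hF : IsClosed F) :
    ⋂ Λ : Finset ℤ, Λ.restrict ⁻¹' (upperClosure (Λ.restrict '' F) : Set (Λ → Fin (K + 1))) ⊆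
      (upperClosure F : Set (Config K)) := by
  intro η hη
  set G : Finset ℤ → Set (Config K) := fun Λ => F ∩ {ξ | Λ.restrict ξ ≤ Λ.restrict η}
  have hG_closed : ∀ Λ, IsClosed (G Λ) := fun Λ =>
    hF.inter ((isClosed_discrete (Iic (Λ.restrict η))).preimage
      (Finset.continuous_restrict (A := fun _ => Fin (K + 1)) Λ))
  have hG_nonempty : ∀ Λ, (G Λ).Nonempty := fun Λ => by
    obtain ⟨_, ⟨ξ, hξ, rfl⟩, hle⟩ := mem_iInter.1 hη Λ
    exact ⟨ξ, hξ, hle⟩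
  have hG_directed : Directed (· ⊇ ·) G := fun Λ Λ' =>
    ⟨Λ ∪ Λ', fun ξ hξ => ⟨hξ.1, fun x => hξ.2 ⟨x, Finset.mem_union_left _ x.2⟩⟩,
      fun ξ hξ => ⟨hξ.1, fun x => hξ.2 ⟨x, Finset.mem_union_right _ x.2⟩⟩⟩
  obtain ⟨ζ, hζ⟩ := IsCompact.nonempty_iInter_of_directed_nonempty_isCompact_isClosed G
    hG_directed hG_nonempty (fun Λ => (hG_closed Λ).isCompact) hG_closed
  exact ⟨ζ, (mem_iInter.1 hζ ∅).1,
    fun x => (mem_iInter.1 hζ {x}).2 ⟨x, Finset.mem_singleton_self x⟩⟩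

lemma measure_upperSet_le_of_cylinder {ν₁ ν₂ : Measure (Config K)}
    [IsFiniteMeasure ν₁] [IsFiniteMeasure ν₂]
    (h : ∀ (Λ : Finset ℤ) (T : Set (Λ → Fin (K + 1))),
      IsUpperSet (Λ.restrict ⁻¹' T : Set (Config K)) →
        ν₁ (Λ.restrict ⁻¹' T) ≤ ν₂ (Λ.restrict ⁻¹' T))
    {U : Set (Config K)} (hU : MeasurableSet U) (hU_upper : IsUpperSet U) : ν₁ U ≤ ν₂ U := by
  rw [hU.measure_eq_iSup_isClosed_of_ne_top (measure_ne_top _ _)]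
  refine iSup_le fun F => iSup_le fun hFU => iSup_le fun hF => ?_
  set C : Finset ℤ → Set (Config K) :=
    fun Λ => Λ.restrict ⁻¹' (upperClosure (Λ.restrict '' F) : Set (Λ → Fin (K + 1)))
  have hC_anti : Antitone C := by
    rintro Λ Λ' hΛ η ⟨_, ⟨ξ, hξ, rfl⟩, hle⟩
    exact ⟨_, ⟨ξ, hξ, rfl⟩, fun x => hle ⟨x, hΛ x.2⟩⟩
  calc ν₁ F ≤ ⨅ Λ, ν₁ (C Λ) :=
        le_iInf fun Λ => measure_mono fun ξ hξ => subset_upperClosure ⟨ξ, hξ, rfl⟩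
    _ ≤ ⨅ Λ, ν₂ (C Λ) :=
        iInf_mono fun Λ => h Λ _ ((upperClosure _).upper.preimage (Finset.monotone_restrict Λ))
    _ = ν₂ (⋂ Λ, C Λ) := (hC_anti.directed_ge.measure_iInter
        (fun Λ => (measurableSet_restrict_preimage Λ _).nullMeasurableSet)
        ⟨∅, measure_ne_top _ _⟩).symm
    _ ≤ ν₂ U := measure_mono ((iInter_restrict_preimage_upperClosure_subset hF).trans
        (upperClosure_min hFU hU_upper))

end Config

lemma measure_prod_le_of_integral_le {A : Type*} [MeasurableSpace A] {K : ℕ}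
    {μ1 μ2 : Measure (A × Config K)} [IsFiniteMeasure μ1] [IsFiniteMeasure μ2]
    (h : ∀ f : A × Config K → ℝ, Measurable f → (∃ C, ∀ p, |f p| ≤ C) →
      IsLocalFn f → (∀ α : A, Monotone fun η => f (α, η)) → ∫ p, f p ∂μ1 ≤ ∫ p, f p ∂μ2)
    {s : Set A} (hs : MeasurableSet s) (Λ : Finset ℤ) (T : Set (Λ → Fin (K + 1)))
    (hT : IsUpperSet (Λ.restrict ⁻¹' T : Set (Config K))) :
    μ1 (s ×ˢ (Λ.restrict ⁻¹' T)) ≤ μ2 (s ×ˢ (Λ.restrict ⁻¹' T)) := by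
  have hsT := hs.prod (measurableSet_restrict_preimage Λ T)
  have h_int := h ((s ×ˢ (Λ.restrict ⁻¹' T)).indicator 1) (measurable_one.indicator hsT)
    ⟨1, fun p => ?_⟩ ⟨Λ, fun α η η' hηη' => ?_⟩ fun α η η' hηη' => ?_
  · rw [integral_indicator_one hsT, integral_indicator_one hsT] at h_int
    exact (ENNReal.toReal_le_toReal (measure_ne_top _ _) (measure_ne_top _ _)).1 h_int
  · by_cases hp : p ∈ s ×ˢ (Λ.restrict ⁻¹' T) <;> simp [hp]
  · have : Λ.restrict η = Λ.restrict η' := funext fun x => hηη' x x.2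
    classical
    simp only [indicator_apply, mem_prod, mem_preimage, this, Pi.one_apply]
  · by_cases hη : (α, η) ∈ s ×ˢ (Λ.restrict ⁻¹' T)
    · simp [hη, hη.1, hT hηη' hη.2]
    · simp [hη, indicator_nonneg]

theorem cond_stochastic_order_iff_general
    {A : Type*} [MeasurableSpace A]
    {K : ℕ}
    (μ1 μ2 : Measure (A × Config K))
    [IsProbabilityMeasure μ1] [IsProbabilityMeasure μ2] :
    (∀ f : A × Config K → ℝ, Measurable f → (∃ C, ∀ p, |f p| ≤ C) →
        IsLocalFn f → (∀ α : A, Monotone fun η => f (α, η)) →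
        ∫ p, f p ∂μ1 ≤ ∫ p, f p ∂μ2)
    ↔
    (μ1.fst = μ2.fst ∧
      ∃ κ1 κ2 : Kernel A (Config K), IsMarkovKernel κ1 ∧ IsMarkovKernel κ2 ∧
        μ1 = μ1.fst ⊗ₘ κ1 ∧ μ2 = μ2.fst ⊗ₘ κ2 ∧
        ∀ᵐ α ∂μ1.fst, ∀ g : Config K → ℝ, Measurable g → (∃ C, ∀ η, |g η| ≤ C) →
          Monotone g → ∫ η, g η ∂(κ1 α) ≤ ∫ η, g η ∂(κ2 α)) := by
  constructor
  · intro h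
    have hfst : μ1.fst = μ2.fst := Measure.eq_of_le_of_isProbabilityMeasure <|
      Measure.le_intro fun s hs _ => by
        simpa [Measure.fst_apply hs, prod_univ] using
          measure_prod_le_of_integral_le h hs ∅ univ (by simp [isUpperSet_univ])
    refine ⟨hfst, μ1.condKernel, μ2.condKernel, inferInstance, inferInstance,
      (μ1.disintegrate _).symm, (μ2.disintegrate _).symm, ?_⟩
    have h_cyl : ∀ᵐ α ∂μ1.fst, ∀ i : Σ Λ : Finset ℤ, Set (Λ → Fin (K + 1)),
        IsUpperSet (i.1.restrict ⁻¹' i.2 : Set (Config K)) →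
          μ1.condKernel α (i.1.restrict ⁻¹' i.2) ≤ μ2.condKernel α (i.1.restrict ⁻¹' i.2) :=
      ae_all_iff.2 fun ⟨Λ, T⟩ => eventually_imp_distrib_left.2 fun hT =>
        ae_condKernel_le_of_measure_prod_le hfst (measurableSet_restrict_preimage Λ T)
          fun _ hs => measure_prod_le_of_integral_le h hs Λ T hT
    filter_upwards [h_cyl] with α hα g hg hg_bdd hg_mono
    exact integral_le_of_measure_upperSet_le
      (fun _ hU hU_upper => measure_upperSet_le_of_cylinder (fun Λ T => hα ⟨Λ, T⟩) hU hU_upper)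
      hg hg_bdd hg_mono
  · rintro ⟨hfst, κ1, κ2, _, _, hμ1, hμ2, hκ⟩ f hf ⟨C, hC⟩ - hf_mono
    rw [hμ1, hμ2, ← hfst]
    exact integral_compProd_le_integral_compProd
      (.of_bound hf.aestronglyMeasurable C (ae_of_all _ hC))
      (.of_bound hf.aestronglyMeasurable C (ae_of_all _ hC))
      (hκ.mono fun α hα => hα _ (hf.comp measurable_prodMk_left) ⟨C, fun η => hC (α, η)⟩
        (hf_mono α))

/-- For probability measures `μ1, μ2` on `A × X`,
`X = {0,…,K}^ℤ`, the following are equivalent: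
(i) `∫ f dμ1 ≤ ∫ f dμ2` for every bounded measurable local function `f` which is
nondecreasing in the configuration variable;
(ii) `μ1` and `μ2` have a common `α`-marginal `Q` and the conditional laws
satisfy `μ1(dη|α) ≤ μ2(dη|α)` stochastically for `Q`-a.e. `α`. -/
theorem cond_stochastic_order_iff
    {A : Type*} [MetricSpace A] [CompactSpace A] [MeasurableSpace A] [BorelSpace A]
    {K : ℕ}
    (μ1 μ2 : Measure (A × Config K))
    [IsProbabilityMeasure μ1] [IsProbabilityMeasure μ2] :
    (∀ f : A × Config K → ℝ, Measurable f → (∃ C, ∀ p, |f p| ≤ C) →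
        IsLocalFn f → (∀ α : A, Monotone fun η => f (α, η)) →
        ∫ p, f p ∂μ1 ≤ ∫ p, f p ∂μ2)
    ↔
    (μ1.fst = μ2.fst ∧
      ∃ κ1 κ2 : Kernel A (Config K), IsMarkovKernel κ1 ∧ IsMarkovKernel κ2 ∧
        μ1 = μ1.fst ⊗ₘ κ1 ∧ μ2 = μ2.fst ⊗ₘ κ2 ∧
        ∀ᵐ α ∂μ1.fst, ∀ g : Config K → ℝ, Measurable g → (∃ C, ∀ η, |g η| ≤ C) →
          Monotone g → ∫ η, g η ∂(κ1 α) ≤ ∫ η, g η ∂(κ2 α)) :=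
  cond_stochastic_order_iff_general μ1 μ2
end

section
/- For the generalized k-step K-exclusion update map T₀^{x,z̲,β,u}: if η ≤ ξ coordinatewise in X = {0,...,K}^ℤ, then T₀^{x,z̲,β,u}η ≤ T₀^{x,z̲,β,u}ξ, i.e., T₀^{x,z̲,β,u} is an increasing map from X to X. -/
/-- Move one particle from site `x` to site `y` (`η^{x,y}`). -/
def moveParticle (η : ℤ → ℕ) (x y : ℤ) : ℤ → ℕ :=
  let η' := Function.update η x (η x - 1)
  Function.update η' y (η' y + 1)

/-- Generalized `k`-step `K`-exclusion update map `T₀^{x,z̲,β,u}`: a particle at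
`x` (if any) jumps to the first site `x + z_i` with fewer than `K` particles
along the path `(x+z₁,…,x+z_k)` (if any), at rate `β^i`, i.e. when
`u < β^{N(x,z̲,η)}`. -/
noncomputable def kstepUpdate (K k : ℕ) (x : ℤ) (z : Fin k → ℤ) (β : Fin k → ℝ)
    (u : ℝ) (η : ℤ → ℕ) : ℤ → ℕ :=
  if h : (Finset.univ.filter fun i : Fin k => η (x + z i) < K).Nonempty then
    let i := (Finset.univ.filter fun i : Fin k => η (x + z i) < K).min' h
    if 0 < η x ∧ u < β i then moveParticle η x (x + z i) else η
  else η

lemma lemA (K : ℕ) (η ξ : ℤ → ℕ) (x a b : ℤ) (hle : ∀ y, η y ≤ ξ y)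
    (hηx : 0 < η x) (haK : η a < K) (hcase : a = b ∨ ξ a = K) :
    ∀ w, moveParticle η x a w ≤ moveParticle ξ x b w := by
  have hx := hle x
  intro w
  have hw := hle w
  have ha := hle a
  have hb := hle b
  rcases hcase with rfl | hK <;>
  · simp only [moveParticle, Function.update_apply]
    split_ifs <;> subst_vars <;> omega

lemma lemB (K : ℕ) (η ξ : ℤ → ℕ) (x a : ℤ) (hle : ∀ y, η y ≤ ξ y)
    (haK : η a < K) (hK : ξ a = K) :
    ∀ w, moveParticle η x a w ≤ ξ w := by
  have hx := hle x
  intro w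
  have hw := hle w
  simp only [moveParticle, Function.update_apply]
  split_ifs <;> subst_vars <;> omega

lemma lemC (η ξ : ℤ → ℕ) (x b : ℤ) (hle : ∀ y, η y ≤ ξ y) (hηx : η x = 0) :
    ∀ w, η w ≤ moveParticle ξ x b w := by
  intro w
  have hw := hle w
  simp only [moveParticle, Function.update_apply]
  split_ifs <;> subst_vars <;> omega

/-- For `β = (β¹,…,β^k) ∈ (0,1]^k` nonincreasing in `i`, the
generalized `k`-step `K`-exclusion update `T₀^{x,z̲,β,u}` is an increasing map
on `X = {0,…,K}^ℤ`: if `η ≤ ξ` coordinatewise then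
`T₀^{x,z̲,β,u} η ≤ T₀^{x,z̲,β,u} ξ`. -/
theorem kstepUpdate_monotone (K k : ℕ) (x : ℤ) (z : Fin k → ℤ) (β : Fin k → ℝ)
    (hβpos : ∀ i, 0 < β i) (hβle1 : ∀ i, β i ≤ 1)
    (hβanti : ∀ i j : Fin k, i ≤ j → β j ≤ β i)
    (u : ℝ) (η ξ : ℤ → ℕ) (hηK : ∀ y, η y ≤ K) (hξK : ∀ y, ξ y ≤ K)
    (hle : ∀ y, η y ≤ ξ y) :
    ∀ y, kstepUpdate K k x z β u η y ≤ kstepUpdate K k x z β u ξ y := by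
  unfold kstepUpdate
  set Sη := Finset.univ.filter (fun i : Fin k => η (x + z i) < K) with hSη
  set Sξ := Finset.univ.filter (fun i : Fin k => ξ (x + z i) < K) with hSξ
  have hsub : Sξ ⊆ Sη := by
    intro i hi
    simp only [hSη, hSξ, Finset.mem_filter, Finset.mem_univ, true_and] at *
    exact lt_of_le_of_lt (hle _) hi
  by_cases hξne : Sξ.Nonempty
  · have hηne : Sη.Nonempty := hξne.mono hsub
    set iη := Sη.min' hηne with hiη
    set iξ := Sξ.min' hξne with hiξ
    have hmin : iη ≤ iξ := Finset.min'_le _ _ (hsub (Sξ.min'_mem hξne))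
    have hηK' : η (x + z iη) < K := (Finset.mem_filter.mp (Sη.min'_mem hηne)).2
    rw [dif_pos hηne, dif_pos hξne]
    by_cases hcη : 0 < η x ∧ u < β iη
    · rw [if_pos hcη]
      by_cases hcξ : 0 < ξ x ∧ u < β iξ
      · rw [if_pos hcξ]
        apply lemA K η ξ x _ _ hle hcη.1 hηK'
        by_cases heq : iη = iξ
        · left; rw [heq]
        · right
          have hnot : iη ∉ Sξ := by
            intro hmem
            exact heq (le_antisymm hmin (Finset.min'_le _ _ hmem))
          refine le_antisymm (hξK _) (le_of_not_gt fun h => hnot ?_)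
          exact Finset.mem_filter.mpr ⟨Finset.mem_univ _, h⟩
      · rw [if_neg hcξ]
        apply lemB K η ξ x _ hle hηK'
        have hnot : iη ∉ Sξ := by
          intro hmem
          have : iη = iξ := le_antisymm hmin (Finset.min'_le _ _ hmem)
          exact hcξ ⟨lt_of_lt_of_le hcη.1 (hle x), this ▸ hcη.2⟩
        refine le_antisymm (hξK _) (le_of_not_gt fun h => hnot ?_)
        exact Finset.mem_filter.mpr ⟨Finset.mem_univ _, h⟩
    · rw [if_neg hcη]
      by_cases hcξ : 0 < ξ x ∧ u < β iξ
      · rw [if_pos hcξ]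
        apply lemC η ξ x _ hle
        by_contra h
        exact hcη ⟨Nat.pos_of_ne_zero h, lt_of_lt_of_le hcξ.2 (hβanti _ _ hmin)⟩
      · rw [if_neg hcξ]; exact hle
  · rw [dif_neg hξne]
    have hK : ∀ i : Fin k, ξ (x + z i) = K := by
      intro i
      refine le_antisymm (hξK _) (le_of_not_gt fun h => hξne ⟨i, ?_⟩)
      exact Finset.mem_filter.mpr ⟨Finset.mem_univ _, h⟩
    by_cases hηne : Sη.Nonempty
    · rw [dif_pos hηne]
      by_cases hcη : 0 < η x ∧ u < β (Sη.min' hηne)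
      · rw [if_pos hcη]
        have hηK' : η (x + z (Sη.min' hηne)) < K := (Finset.mem_filter.mp (Sη.min'_mem hηne)).2
        exact lemB K η ξ x _ hle hηK' (hK _)
      · rw [if_neg hcη]; exact hle
    · rw [dif_neg hηne]; exact hle
end

section
/- Let (Z₁,...,Z_{2k}) be a random self-avoiding path on K = {−k,...,k}∖{0} with distribution P(Z₁ = y) = υ_y / Σ_{z∈K} υ_z and P(Z_i = y | Z₁,...,Z_{i−1}) = υ_y / Σ_{z ∈ K∖{Z₁,...,Z_{i−1}}} υ_z for 2 ≤ i ≤ 2k. Let Θ be a nonempty subset of {z ∈ K : υ_z ≠ 0}, τ = inf{i : Z_i ∈ Θ}, and Y = Z_τ. Then P(Y = y) = 1_Θ(y) · υ_y / Σ_{y′∈Θ} υ_{y′}. -/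
/-!
First-step analysis. Condition on the first point `z` of the path. If `z ∈ Θ`, then `Y = z`,
which has probability `υ z / S` with `S = ∑ υ`. Otherwise the rest of the path is the weighted
self-avoiding path on `ι ∖ {z}` started afresh, so by induction on `|ι|` it hits `y ∈ Θ` first
with probability `υ y / T`, `T = ∑_{Θ} υ`. Hence
`P(Y = y) = υ y / S + (S - T) / S * υ y / T = υ y / T`.
-/

open Finset

section

variable {ι : Type*} [Fintype ι] [DecidableEq ι]

/-- The first time the random self-avoiding path `σ` (an enumeration of `ι`,
sampled without replacement proportionally to the weights) visits `Θ`. -/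
noncomputable def tauIdx (Θ : Finset ι) (σ : Fin (Fintype.card ι) ≃ ι) : ℕ :=
  sInf {i : ℕ | ∃ h : i < Fintype.card ι, σ ⟨i, h⟩ ∈ Θ}

/-- The probability of the initial segment (up to and including time `τ`) of the
enumeration `σ` under weighted sampling without replacement: at each step the
next element is chosen among the unvisited ones with probability proportional
to its weight `υ`. -/
noncomputable def pathProbUpTo (υ : ι → ℝ) (Θ : Finset ι)
    (σ : Fin (Fintype.card ι) ≃ ι) : ℝ :=
  ∏ i : Fin (Fintype.card ι),
    if (i : ℕ) ≤ tauIdx Θ σ then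
      υ (σ i) / (∑ j ∈ Finset.univ.filter (fun j => i ≤ j), υ (σ j))
    else 1

/-- `P(Y = y)`, where `Y = Z_τ` is the first element of `Θ` visited by the
weighted self-avoiding path: the sum over all enumerations `σ` of the
probability of the initial segment of `σ` up to `τ`, corrected by the number
`(n - 1 - τ)!` of completions of that initial segment. -/
noncomputable def firstHitProb (υ : ι → ℝ) (Θ : Finset ι) (y : ι) : ℝ :=
  ∑ σ : Fin (Fintype.card ι) ≃ ι,
    if h : tauIdx Θ σ < Fintype.card ι then
      (if σ ⟨tauIdx Θ σ, h⟩ = y then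
        pathProbUpTo υ Θ σ /
          ((Fintype.card ι - 1 - tauIdx Θ σ).factorial : ℝ)
      else 0)
    else 0

end

namespace FirstHit

section PrefixProb

variable {n : ℕ}

/-- `pathProbUpTo υ Θ σ` is `prefixProb (υ ∘ σ) (tauIdx Θ σ)`; for lengths `n + 1` the first
factor can be split off with `Fin.cons`. -/
noncomputable def prefixProb (w : Fin n → ℝ) (t : ℕ) : ℝ :=
  ∏ i : Fin n, if (i : ℕ) ≤ t then w i / ∑ j ∈ univ.filter (fun j => i ≤ j), w j else 1

lemma prefixProb_comp_finCongr {m : ℕ} (h : n = m) (w : Fin m → ℝ) (t : ℕ) :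
    prefixProb (w ∘ finCongr h) t = prefixProb w t := by
  subst h; rfl

lemma prefixProb_zero (w : Fin (n + 1) → ℝ) : prefixProb w 0 = w 0 / ∑ j, w j := by
  rw [prefixProb, Fin.prod_univ_succ, Finset.prod_eq_one fun i _ => if_neg (by simp)]
  simp

lemma prefixProb_succ (w : Fin (n + 1) → ℝ) (t : ℕ) :
    prefixProb w (t + 1) = w 0 / (∑ j, w j) * prefixProb (Fin.tail w) t := by
  have tail_sum (i : Fin n) : ∑ j ∈ univ.filter (fun j => i.succ ≤ j), w j
      = ∑ j ∈ univ.filter (fun j => i ≤ j), Fin.tail w j := by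
    simp only [Finset.sum_filter, Fin.sum_univ_succ, Fin.succ_le_succ_iff, Fin.tail]
    simp [Fin.succ_ne_zero]
  rw [prefixProb, prefixProb, Fin.prod_univ_succ]
  simp [tail_sum, Fin.tail]

end PrefixProb

section Enumeration

variable {ι : Type*} [Fintype ι] [DecidableEq ι]

lemma card_subtype_ne_add_one (z : ι) : Fintype.card {x // x ≠ z} + 1 = Fintype.card ι := by
  simpa using Fintype.card_congr (Equiv.optionSubtypeNe z)

def finEquivOption (z : ι) : Fin (Fintype.card ι) ≃ Option (Fin (Fintype.card {x // x ≠ z})) :=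
  (finCongr (card_subtype_ne_add_one z).symm).trans (finSuccEquiv _)

def consEquiv (z : ι) (e : Fin (Fintype.card {x // x ≠ z}) ≃ {x // x ≠ z}) :
    Fin (Fintype.card ι) ≃ ι :=
  (finEquivOption z).trans ((Equiv.optionSubtype z).symm e)

lemma finEquivOption_zero (z : ι) (h : 0 < Fintype.card ι) : finEquivOption z ⟨0, h⟩ = none :=
  finSuccEquiv_zero (n := Fintype.card {x // x ≠ z})

variable (z : ι) (e : Fin (Fintype.card {x // x ≠ z}) ≃ {x // x ≠ z})

lemma coe_consEquiv :
    ⇑(consEquiv z e) = Fin.cons z (fun j => (e j : ι)) ∘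
      finCongr (card_subtype_ne_add_one z).symm := by
  ext i
  obtain ⟨i, rfl⟩ := (finCongr (card_subtype_ne_add_one z)).surjective i
  refine Fin.cases ?_ (fun j => ?_) i <;> simp [consEquiv, finEquivOption]

lemma consEquiv_zero (h : 0 < Fintype.card ι) : consEquiv z e ⟨0, h⟩ = z := by
  rw [coe_consEquiv]; rfl

lemma consEquiv_succ (j : ℕ) (h : j + 1 < Fintype.card ι) :
    consEquiv z e ⟨j + 1, h⟩ = e ⟨j, by have := card_subtype_ne_add_one z; omega⟩ := by
  rw [coe_consEquiv]; rfl

lemma sum_equiv_eq_sum_consEquiv [Nonempty ι] {M : Type*} [AddCommMonoid M]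
    (f : (Fin (Fintype.card ι) ≃ ι) → M) :
    ∑ σ, f σ = ∑ z, ∑ e : Fin (Fintype.card {x // x ≠ z}) ≃ {x // x ≠ z}, f (consEquiv z e) := by
  have h0 : 0 < Fintype.card ι := Fintype.card_pos
  rw [← Fintype.sum_fiberwise (fun σ => σ ⟨0, h0⟩) f]
  refine Fintype.sum_congr _ _ fun z => (Fintype.sum_equiv (((Equiv.optionSubtype z).symm).trans
    (((finEquivOption z).symm.equivCongr (Equiv.refl ι)).subtypeEquiv fun o => ?_)) _ _
    fun e => rfl).symm
  change o none = z ↔ o (finEquivOption z ⟨0, h0⟩) = z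
  rw [finEquivOption_zero]

end Enumeration

section HittingTime

variable {ι : Type*} [Fintype ι] {Θ : Finset ι}

lemma exists_apply_tauIdx_mem (hΘ : Θ.Nonempty) (σ : Fin (Fintype.card ι) ≃ ι) :
    ∃ h : tauIdx Θ σ < Fintype.card ι, σ ⟨tauIdx Θ σ, h⟩ ∈ Θ := by
  obtain ⟨x, hx⟩ := hΘ
  exact Nat.sInf_mem (s := {i | ∃ h : i < Fintype.card ι, σ ⟨i, h⟩ ∈ Θ})
    ⟨σ.symm x, (σ.symm x).isLt, by simpa using hx⟩

lemma tauIdx_lt_card (hΘ : Θ.Nonempty) (σ : Fin (Fintype.card ι) ≃ ι) :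
    tauIdx Θ σ < Fintype.card ι :=
  (exists_apply_tauIdx_mem hΘ σ).1

noncomputable def firstHit (hΘ : Θ.Nonempty) (σ : Fin (Fintype.card ι) ≃ ι) : ι :=
  σ ⟨tauIdx Θ σ, tauIdx_lt_card hΘ σ⟩

lemma firstHit_mem (hΘ : Θ.Nonempty) (σ : Fin (Fintype.card ι) ≃ ι) : firstHit hΘ σ ∈ Θ :=
  (exists_apply_tauIdx_mem hΘ σ).2

lemma firstHit_eq_of_tauIdx_eq (hΘ : Θ.Nonempty) {σ : Fin (Fintype.card ι) ≃ ι} {t : ℕ}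
    (ht : tauIdx Θ σ = t) (h : t < Fintype.card ι) : firstHit hΘ σ = σ ⟨t, h⟩ := by
  subst ht; rfl

variable [DecidableEq ι] (z : ι) (e : Fin (Fintype.card {x // x ≠ z}) ≃ {x // x ≠ z})

lemma tauIdx_consEquiv_of_mem (hz : z ∈ Θ) : tauIdx Θ (consEquiv z e) = 0 :=
  Nat.sInf_eq_zero.mpr <| Or.inl ⟨Fintype.card_pos_iff.mpr ⟨z⟩, by rwa [consEquiv_zero]⟩

lemma tauIdx_consEquiv_of_notMem (hz : z ∉ Θ) (hΘ : (Θ.subtype (· ≠ z)).Nonempty) :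
    tauIdx Θ (consEquiv z e) = tauIdx (Θ.subtype (· ≠ z)) e + 1 := by
  have hc := card_subtype_ne_add_one z
  have shift : {m | ∃ h : m + 1 < Fintype.card ι, consEquiv z e ⟨m + 1, h⟩ ∈ Θ}
      = {m | ∃ h : m < Fintype.card {x // x ≠ z}, e ⟨m, h⟩ ∈ Θ.subtype (· ≠ z)} := by
    ext m
    simp only [Set.mem_ofPred_eq, consEquiv_succ, Finset.mem_subtype]
    exact ⟨fun ⟨h, hm⟩ => ⟨by omega, hm⟩, fun ⟨h, hm⟩ => ⟨by omega, hm⟩⟩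
  have pos : 1 ≤ sInf {m | ∃ h : m < Fintype.card ι, consEquiv z e ⟨m, h⟩ ∈ Θ} := by
    obtain ⟨x, hx⟩ := hΘ
    rw [Nat.one_le_iff_ne_zero, Ne, Nat.sInf_eq_zero, not_or, ← Ne, ← Set.nonempty_iff_ne_empty]
    refine ⟨fun ⟨h, hm⟩ => hz (by rwa [consEquiv_zero] at hm), _,
      exists_apply_tauIdx_mem (⟨x, Finset.mem_subtype.mp hx⟩ : Θ.Nonempty) _⟩
  rw [tauIdx, tauIdx, ← Nat.sInf_add pos, shift]

lemma pathProbUpTo_consEquiv (υ : ι → ℝ) {t : ℕ} (ht : tauIdx Θ (consEquiv z e) = t) :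
    pathProbUpTo υ Θ (consEquiv z e) = prefixProb (Fin.cons (υ z) fun j => υ (e j)) t := by
  change prefixProb (υ ∘ consEquiv z e) _ = _
  rw [ht, coe_consEquiv, ← Function.comp_assoc, Fin.comp_cons, prefixProb_comp_finCongr]
  rfl

lemma sum_cons_consEquiv {M : Type*} [AddCommMonoid M] (f : ι → M) :
    ∑ j, (Fin.cons (f z) fun j => f (e j) : Fin (Fintype.card {x // x ≠ z} + 1) → M) j
      = ∑ x, f x := by
  rw [Fin.sum_cons, Equiv.sum_comp e (fun x => f x), Fintype.sum_eq_add_sum_subtype_ne f z]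

end HittingTime

section FirstStep

variable {ι : Type*} [Fintype ι] [DecidableEq ι] {Θ : Finset ι}

noncomputable def hitWeight (υ : ι → ℝ) (hΘ : Θ.Nonempty) (y : ι)
    (σ : Fin (Fintype.card ι) ≃ ι) : ℝ :=
  if firstHit hΘ σ = y then
    pathProbUpTo υ Θ σ / ((Fintype.card ι - 1 - tauIdx Θ σ).factorial : ℝ) else 0

lemma firstHitProb_eq_sum_hitWeight (υ : ι → ℝ) (hΘ : Θ.Nonempty) (y : ι) :
    firstHitProb υ Θ y = ∑ σ, hitWeight υ hΘ y σ :=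
  Finset.sum_congr rfl fun σ _ => dif_pos (tauIdx_lt_card hΘ σ)

lemma firstHitProb_eq_zero_of_notMem (υ : ι → ℝ) (hΘ : Θ.Nonempty) {y : ι} (hy : y ∉ Θ) :
    firstHitProb υ Θ y = 0 := by
  rw [firstHitProb_eq_sum_hitWeight υ hΘ]
  exact Finset.sum_eq_zero fun σ _ =>
    if_neg fun h : firstHit hΘ σ = y => hy (h ▸ firstHit_mem hΘ σ)

variable (υ : ι → ℝ) (hΘ : Θ.Nonempty) (y z : ι)
  (e : Fin (Fintype.card {x // x ≠ z}) ≃ {x // x ≠ z})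

lemma hitWeight_consEquiv_of_mem (hz : z ∈ Θ) :
    hitWeight υ hΘ y (consEquiv z e) = if z = y then
      υ z / (∑ x, υ x) / ((Fintype.card {x // x ≠ z}).factorial : ℝ) else 0 := by
  have ht := tauIdx_consEquiv_of_mem z e hz
  rw [hitWeight, firstHit_eq_of_tauIdx_eq hΘ ht (Fintype.card_pos_iff.mpr ⟨z⟩), consEquiv_zero,
    pathProbUpTo_consEquiv z e υ ht, prefixProb_zero, Fin.cons_zero, sum_cons_consEquiv, ht,
    ← card_subtype_ne_add_one z, Nat.add_sub_cancel, Nat.sub_zero]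

lemma hitWeight_consEquiv_of_notMem (hz : z ∉ Θ) (hΘ' : (Θ.subtype (· ≠ z)).Nonempty)
    (hyz : y ≠ z) :
    hitWeight υ hΘ y (consEquiv z e)
      = υ z / (∑ x, υ x) * hitWeight (fun x : {x // x ≠ z} => υ x) hΘ' ⟨y, hyz⟩ e := by
  have hc := card_subtype_ne_add_one z
  have ht := tauIdx_consEquiv_of_notMem z e hz hΘ'
  have ht' := tauIdx_lt_card hΘ' e
  rw [hitWeight, hitWeight, firstHit_eq_of_tauIdx_eq hΘ ht (by omega), consEquiv_succ,
    pathProbUpTo_consEquiv z e υ ht, prefixProb_succ, Fin.cons_zero, Fin.tail_cons,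
    sum_cons_consEquiv, ht, show Fintype.card ι - 1 - (tauIdx (Θ.subtype (· ≠ z)) e + 1)
      = Fintype.card {x // x ≠ z} - 1 - tauIdx (Θ.subtype (· ≠ z)) e by omega]
  simp only [firstHit, Subtype.ext_iff, mul_ite, mul_zero, mul_div_assoc]
  rfl

lemma firstHitProb_eq_sum_first_step {y : ι} (hy : y ∈ Θ) :
    firstHitProb υ Θ y = ∑ z, υ z / (∑ x, υ x) *
      if hz : z ∈ Θ then (if z = y then 1 else 0)
      else firstHitProb (fun x : {x // x ≠ z} => υ x) (Θ.subtype (· ≠ z))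
        ⟨y, ne_of_mem_of_not_mem hy hz⟩ := by
  have hΘ : Θ.Nonempty := ⟨y, hy⟩
  have : Nonempty ι := ⟨y⟩
  rw [firstHitProb_eq_sum_hitWeight υ hΘ, sum_equiv_eq_sum_consEquiv]
  refine Fintype.sum_congr _ _ fun z => ?_
  by_cases hz : z ∈ Θ
  -- the `(card ι - 1)!` enumerations starting with `z` all have the same weight
  · simp only [hitWeight_consEquiv_of_mem υ hΘ y z _ hz, dif_pos hz, Finset.sum_const,
      Finset.card_univ, Fintype.card_equiv (Fintype.equivFin _).symm, Fintype.card_fin,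
      nsmul_eq_mul]
    split_ifs
    · field_simp
    · simp
  · have hyz : y ≠ z := ne_of_mem_of_not_mem hy hz
    have hΘ' : (Θ.subtype (· ≠ z)).Nonempty := ⟨⟨y, hyz⟩, Finset.mem_subtype.mpr hy⟩
    simp only [hitWeight_consEquiv_of_notMem υ hΘ y z _ hz hΘ' hyz, dif_neg hz,
      firstHitProb_eq_sum_hitWeight _ hΘ', Finset.mul_sum]

end FirstStep

theorem firstHitProb_eq_of_mem {ι : Type*} [Fintype ι] [DecidableEq ι] (υ : ι → ℝ)
    (hυ : ∀ z, 0 ≤ υ z) {Θ : Finset ι} (hΘ : ∀ z ∈ Θ, υ z ≠ 0) {y : ι} (hy : y ∈ Θ) :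
    firstHitProb υ Θ y = υ y / ∑ z ∈ Θ, υ z := by
  induction hn : Fintype.card ι generalizing ι with
  | zero => exact absurd hn (Fintype.card_pos_iff.mpr ⟨y⟩).ne'
  | succ n ih =>
    have hT : 0 < ∑ z ∈ Θ, υ z :=
      Finset.sum_pos' (fun z _ => hυ z) ⟨y, hy, (hυ y).lt_of_ne' (hΘ y hy)⟩
    have hS : 0 < ∑ x, υ x := hT.trans_le (Finset.sum_le_univ_sum_of_nonneg hυ)
    have hcompl : ∑ z ∈ Θᶜ, υ z = ∑ x, υ x - ∑ z ∈ Θ, υ z := by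
      rw [← Finset.sum_add_sum_compl Θ υ]; ring
    have hrest (z : ι) (hz : z ∉ Θ) :
        firstHitProb (fun x : {x // x ≠ z} => υ x) (Θ.subtype (· ≠ z))
          ⟨y, ne_of_mem_of_not_mem hy hz⟩ = υ y / ∑ z ∈ Θ, υ z := by
      have hc := card_subtype_ne_add_one z
      rw [ih (fun x : {x // x ≠ z} => υ x) (fun x => hυ x)
        (fun x hx => hΘ x (Finset.mem_subtype.mp hx)) (Finset.mem_subtype.mpr hy) (by omega),
        Finset.sum_subtype_of_mem (fun x => υ x) fun x hx => ne_of_mem_of_not_mem hx hz]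
    calc firstHitProb υ Θ y
        = ∑ z ∈ Θ, υ z / (∑ x, υ x) * (if z = y then 1 else 0)
            + ∑ z ∈ Θᶜ, υ z / (∑ x, υ x) * (υ y / ∑ z ∈ Θ, υ z) := by
          rw [firstHitProb_eq_sum_first_step υ hy, ← Finset.sum_add_sum_compl Θ]
          congr 1 <;> refine Finset.sum_congr rfl fun z hz => ?_
          · rw [dif_pos hz]
          · rw [dif_neg (Finset.mem_compl.mp hz), hrest z (Finset.mem_compl.mp hz)]
      _ = υ y / (∑ x, υ x)
            + (∑ x, υ x - ∑ z ∈ Θ, υ z) / (∑ x, υ x) * (υ y / ∑ z ∈ Θ, υ z) := by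
          simp only [mul_ite, mul_one, mul_zero, Finset.sum_ite_eq', if_pos hy,
            ← Finset.sum_mul, ← Finset.sum_div, hcompl]
      _ = υ y / ∑ z ∈ Θ, υ z := by
          field_simp
          ring

end FirstHit

theorem firstHitProb_eq_general (k : ℕ)
    (υ : {z : ℤ // z ∈ (Finset.Icc (-(k : ℤ)) k).erase 0} → ℝ)
    (hυ : ∀ z, 0 ≤ υ z)
    (Θ : Finset {z : ℤ // z ∈ (Finset.Icc (-(k : ℤ)) k).erase 0})
    (hΘne : Θ.Nonempty) (hΘ : ∀ z ∈ Θ, υ z ≠ 0)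
    (y : {z : ℤ // z ∈ (Finset.Icc (-(k : ℤ)) k).erase 0}) :
    firstHitProb υ Θ y = if y ∈ Θ then υ y / (∑ z ∈ Θ, υ z) else 0 := by
  split_ifs with hy
  · exact FirstHit.firstHitProb_eq_of_mem υ hυ hΘ hy
  · exact FirstHit.firstHitProb_eq_zero_of_notMem υ hΘne hy

/-- Let `𝒦 = {-k,…,k} ∖ {0}`, let `(υ_z)_{z ∈ 𝒦}` be
nonnegative weights, and let `(Z₁,…,Z_{2k})` be the random self-avoiding path on
`𝒦` sampled without replacement proportionally to `υ`.  For a nonempty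
`Θ ⊆ {z : υ_z ≠ 0}`, with `τ = inf{i : Z_i ∈ Θ}` and `Y = Z_τ`, one has
`P(Y = y) = 1_Θ(y) · υ_y / Σ_{y' ∈ Θ} υ_{y'}`. -/
theorem firstHitProb_eq (k : ℕ) (hk : 0 < k)
    (υ : {z : ℤ // z ∈ (Finset.Icc (-(k : ℤ)) k).erase 0} → ℝ)
    (hυ : ∀ z, 0 ≤ υ z)
    (Θ : Finset {z : ℤ // z ∈ (Finset.Icc (-(k : ℤ)) k).erase 0})
    (hΘne : Θ.Nonempty) (hΘ : ∀ z ∈ Θ, υ z ≠ 0)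
    (y : {z : ℤ // z ∈ (Finset.Icc (-(k : ℤ)) k).erase 0}) :
    firstHitProb υ Θ y = if y ∈ Θ then υ y / (∑ z ∈ Θ, υ z) else 0 :=
  firstHitProb_eq_general k υ hυ Θ hΘne hΘ y
end

section
/- Let G^Q(ρ) = ∫ j̃(α,η) ν^{Q,ρ}(dα,dη) where j̃(α,η) = α(0) Σ_z z p(z) b(η(0),η(z)), and suppose for ρ ≤ ρ′ there is a shift-invariant coupling ν̄^{ρ,ρ′} of ν^{Q,ρ} and ν^{Q,ρ′} supported on ordered pairs with ∫|η(x) − ξ(x)| dν̄^{ρ,ρ′} = ρ′ − ρ for all x. Then |G^Q(ρ) − G^Q(ρ′)| ≤ V |ρ − ρ′| with V = 2 c^{−1} ‖b‖_∞ Σ_{z∈ℤ} |z| p(z), provided Σ_z |z| p(z) < ∞, α(0) ≤ c^{−1}, and b is bounded. -/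
open MeasureTheory

/-! Since `0 ≤ b ≤ B`, changing the occupations at `0` and `z` moves `b (η 0) (η z)` by at most
`B (1{η 0 ≠ ξ 0} + 1{η z ≠ ξ z})`, and for integer occupations `1{η x ≠ ξ x} ≤ |η x - ξ x|`.
Bounding the flux difference pointwise by this series, integrating it against the coupling and
exchanging sum and integral, each of the two indicators contributes at most `ρ' - ρ`. -/

/-- The microscopic flux `j̃(α,η) = α(0) Σ_z z p(z) b(η(0),η(z))`. -/
noncomputable def microFlux (p : ℤ → ℝ) (b : ℕ → ℕ → ℝ)
    (α : ℤ → ℝ) (η : ℤ → ℕ) : ℝ :=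
  α 0 * ∑' z : ℤ, (z : ℝ) * p z * b (η 0) (η z)

theorem Measurable.tsum_of_summable {α ι β : Type*} [MeasurableSpace α] [Countable ι]
    [AddCommMonoid β] [TopologicalSpace β] [TopologicalSpace.PseudoMetrizableSpace β]
    [SecondCountableTopology β]
    [MeasurableSpace β] [BorelSpace β] [ContinuousAdd β]
    {f : ι → α → β} (hf : ∀ i, Measurable (f i)) (hs : ∀ x, Summable fun i => f i x) :
    Measurable fun x => ∑' i, f i x :=
  measurable_of_tendsto_metrizable' Filter.atTop
    (fun s => Finset.measurable_sum s fun i _ => hf i)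
    (tendsto_pi_nhds.2 fun x => (hs x).hasSum)

def disagreement {ι β : Type*} [DecidableEq β] (η ξ : ι → β) (x : ι) : ℝ :=
  if η x = ξ x then 0 else 1

section disagreement
variable {ι β : Type*} [DecidableEq β]

theorem disagreement_nonneg (η ξ : ι → β) (x : ι) : 0 ≤ disagreement η ξ x := by
  unfold disagreement; split_ifs <;> norm_num

theorem disagreement_le_one (η ξ : ι → β) (x : ι) : disagreement η ξ x ≤ 1 := by
  unfold disagreement; split_ifs <;> norm_num

theorem disagreement_le_abs_sub (η ξ : ι → ℕ) (x : ι) :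
    disagreement η ξ x ≤ |(η x : ℝ) - ξ x| := by
  unfold disagreement
  split_ifs with h
  · exact abs_nonneg _
  · have : (η x : ℤ) - ξ x ≠ 0 := sub_ne_zero.2 (by exact_mod_cast h)
    exact_mod_cast Int.one_le_abs this

theorem abs_sub_le_mul_disagreement {f : β → β → ℝ} {B : ℝ} (hf0 : ∀ m n, 0 ≤ f m n)
    (hfB : ∀ m n, f m n ≤ B) (η ξ : ι → β) (x y : ι) :
    |f (η x) (η y) - f (ξ x) (ξ y)| ≤ B * (disagreement η ξ x + disagreement η ξ y) := by
  have hosc : |f (η x) (η y) - f (ξ x) (ξ y)| ≤ B :=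
    abs_sub_le_of_nonneg_of_le (hf0 _ _) (hfB _ _) (hf0 _ _) (hfB _ _)
  unfold disagreement
  split_ifs with hx hy hy
  · simp [hx, hy]
  all_goals linarith [abs_nonneg (f (η x) (η y) - f (ξ x) (ξ y))]

theorem measurable_disagreement {Ω : Type*} [MeasurableSpace Ω] [MeasurableSpace β]
    [MeasurableSingletonClass β] [Countable β] {X Y : Ω → ι → β}
    (hX : Measurable X) (hY : Measurable Y) (x : ι) :
    Measurable fun ω => disagreement (X ω) (Y ω) x :=
  Measurable.ite (measurableSet_eq_fun (measurable_pi_apply x |>.comp hX)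
    (measurable_pi_apply x |>.comp hY)) measurable_const measurable_const

end disagreement

section flux
variable {p : ℤ → ℝ} {b : ℕ → ℕ → ℝ} {B : ℝ}

theorem norm_flux_term_le (hp : ∀ z, 0 ≤ p z) (hb0 : ∀ n m, 0 ≤ b n m)
    (hbB : ∀ n m, b n m ≤ B) (η : ℤ → ℕ) (z : ℤ) :
    ‖(z : ℝ) * p z * b (η 0) (η z)‖ ≤ B * (|(z : ℝ)| * p z) := by
  rw [Real.norm_eq_abs, abs_mul, abs_mul, abs_of_nonneg (hp z), abs_of_nonneg (hb0 _ _), mul_comm B]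
  exact mul_le_mul_of_nonneg_left (hbB _ _) (mul_nonneg (abs_nonneg _) (hp z))

theorem summable_flux_term (hp : ∀ z, 0 ≤ p z) (hpsum : Summable fun z : ℤ => |(z : ℝ)| * p z)
    (hb0 : ∀ n m, 0 ≤ b n m) (hbB : ∀ n m, b n m ≤ B) (η : ℤ → ℕ) :
    Summable fun z : ℤ => (z : ℝ) * p z * b (η 0) (η z) :=
  .of_norm_bounded (hpsum.mul_left B) (norm_flux_term_le hp hb0 hbB η)

theorem abs_microFlux_le (hp : ∀ z, 0 ≤ p z) (hpsum : Summable fun z : ℤ => |(z : ℝ)| * p z)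
    (hb0 : ∀ n m, 0 ≤ b n m) (hbB : ∀ n m, b n m ≤ B) (α : ℤ → ℝ) (η : ℤ → ℕ) :
    |microFlux p b α η| ≤ |α 0| * (B * ∑' z : ℤ, |(z : ℝ)| * p z) := by
  rw [microFlux, abs_mul, ← tsum_mul_left]
  exact mul_le_mul_of_nonneg_left
    (tsum_of_norm_bounded (hpsum.mul_left B).hasSum (norm_flux_term_le hp hb0 hbB η)) (abs_nonneg _)

theorem measurable_microFlux
    (hs : ∀ η : ℤ → ℕ, Summable fun z : ℤ => (z : ℝ) * p z * b (η 0) (η z)) :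
    Measurable fun q : (ℤ → ℝ) × (ℤ → ℕ) => microFlux p b q.1 q.2 := by
  have hterm (z : ℤ) :
      Measurable fun q : (ℤ → ℝ) × (ℤ → ℕ) => (z : ℝ) * p z * b (q.2 0) (q.2 z) := by
    have hsites : Measurable fun q : (ℤ → ℝ) × (ℤ → ℕ) => (q.2 0, q.2 z) := by fun_prop
    exact measurable_const.mul ((measurable_of_countable fun n : ℕ × ℕ => b n.1 n.2).comp hsites)
  exact (measurable_pi_apply 0).comp measurable_fst |>.mul
    (Measurable.tsum_of_summable hterm fun q => hs q.2)

theorem abs_microFlux_sub_le (hp : ∀ z, 0 ≤ p z) (hpsum : Summable fun z : ℤ => |(z : ℝ)| * p z)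
    (hb0 : ∀ n m, 0 ≤ b n m) (hbB : ∀ n m, b n m ≤ B) (α : ℤ → ℝ) (η ξ : ℤ → ℕ) :
    |microFlux p b α η - microFlux p b α ξ| ≤
      |α 0| * B * ∑' z : ℤ, |(z : ℝ)| * p z * (disagreement η ξ 0 + disagreement η ξ z) := by
  have hterm (z : ℤ) : ‖(z : ℝ) * p z * b (η 0) (η z) - (z : ℝ) * p z * b (ξ 0) (ξ z)‖ ≤
      B * (|(z : ℝ)| * p z * (disagreement η ξ 0 + disagreement η ξ z)) := by
    rw [Real.norm_eq_abs, ← mul_sub, abs_mul, abs_mul, abs_of_nonneg (hp z)]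
    calc |(z : ℝ)| * p z * |b (η 0) (η z) - b (ξ 0) (ξ z)|
        ≤ |(z : ℝ)| * p z * (B * (disagreement η ξ 0 + disagreement η ξ z)) :=
          mul_le_mul_of_nonneg_left (abs_sub_le_mul_disagreement hb0 hbB η ξ 0 z)
            (mul_nonneg (abs_nonneg _) (hp z))
      _ = _ := by ring
  have hmajorant :
      Summable fun z : ℤ => |(z : ℝ)| * p z * (disagreement η ξ 0 + disagreement η ξ z) :=
    .of_nonneg_of_le
      (fun z => mul_nonneg (mul_nonneg (abs_nonneg _) (hp z))
        (add_nonneg (disagreement_nonneg η ξ 0) (disagreement_nonneg η ξ z)))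
      (fun z => mul_le_mul_of_nonneg_left
        (by linarith [disagreement_le_one η ξ 0, disagreement_le_one η ξ z])
        (mul_nonneg (abs_nonneg _) (hp z)))
      (hpsum.mul_right 2)
  rw [microFlux, microFlux, ← mul_sub, ← (summable_flux_term hp hpsum hb0 hbB η).tsum_sub
    (summable_flux_term hp hpsum hb0 hbB ξ), abs_mul, mul_assoc, ← tsum_mul_left]
  exact mul_le_mul_of_nonneg_left (tsum_of_norm_bounded (hmajorant.mul_left B).hasSum hterm)
    (abs_nonneg _)

end flux

section integral
variable {Ω ι : Type*} [MeasurableSpace Ω] {μ : Measure Ω} [IsFiniteMeasure μ] [Countable ι]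
  {w : ι → ℝ} {f : ι → Ω → ℝ} {M : ℝ}

theorem integrable_tsum_mul (hw0 : ∀ i, 0 ≤ w i) (hw : Summable w) (hf : ∀ i, Measurable (f i))
    (hf0 : ∀ i ω, 0 ≤ f i ω) (hfM : ∀ i ω, f i ω ≤ M) :
    Integrable (fun ω => ∑' i, w i * f i ω) μ := by
  have hsumm (ω : Ω) : Summable fun i => w i * f i ω :=
    .of_nonneg_of_le (fun i => mul_nonneg (hw0 i) (hf0 i ω))
      (fun i => mul_le_mul_of_nonneg_left (hfM i ω) (hw0 i)) (hw.mul_right M)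
  refine .of_bound (Measurable.tsum_of_summable (fun i => (hf i).const_mul (w i)) hsumm
    |>.aestronglyMeasurable) ((∑' i, w i) * M) (ae_of_all _ fun ω => ?_)
  rw [Real.norm_eq_abs, abs_of_nonneg (tsum_nonneg fun i => mul_nonneg (hw0 i) (hf0 i ω)),
    ← tsum_mul_right]
  exact (hsumm ω).tsum_le_tsum (fun i => mul_le_mul_of_nonneg_left (hfM i ω) (hw0 i))
    (hw.mul_right M)

theorem integral_tsum_mul_le (hw0 : ∀ i, 0 ≤ w i) (hw : Summable w) (hf : ∀ i, Measurable (f i))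
    (hf0 : ∀ i ω, 0 ≤ f i ω) (hfM : ∀ i ω, f i ω ≤ M) {r : ℝ} (hr : ∀ i, ∫ ω, f i ω ∂μ ≤ r) :
    ∫ ω, ∑' i, w i * f i ω ∂μ ≤ (∑' i, w i) * r := by
  have hint (i : ι) : Integrable (fun ω => w i * f i ω) μ :=
    .const_mul (.of_bound (hf i).aestronglyMeasurable M
      (ae_of_all _ fun ω => by rw [Real.norm_of_nonneg (hf0 i ω)]; exact hfM i ω)) (w i)
  have hterm (i : ι) : ∫ ω, w i * f i ω ∂μ ≤ w i * r := by
    rw [integral_const_mul]; exact mul_le_mul_of_nonneg_left (hr i) (hw0 i)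
  have hterm_nonneg (i : ι) : 0 ≤ ∫ ω, w i * f i ω ∂μ :=
    integral_nonneg fun ω => mul_nonneg (hw0 i) (hf0 i ω)
  have hsumm : Summable fun i => ∫ ω, w i * f i ω ∂μ :=
    .of_nonneg_of_le hterm_nonneg hterm (hw.mul_right r)
  have hsumm_norm : Summable fun i => ∫ ω, ‖w i * f i ω‖ ∂μ := by
    simpa only [Real.norm_of_nonneg (mul_nonneg (hw0 _) (hf0 _ _))] using hsumm
  rw [← integral_tsum_of_summable_integral_norm hint hsumm_norm, ← tsum_mul_right]
  exact hsumm.tsum_le_tsum hterm (hw.mul_right r)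

end integral

section coupling
variable {Ω : Type*} [MeasurableSpace Ω] {μ : Measure Ω} [IsFiniteMeasure μ]

theorem integrable_disagreement {ι : Type*} {X Y : Ω → ι → ℕ} (hX : Measurable X)
    (hY : Measurable Y) (x : ι) : Integrable (fun ω => disagreement (X ω) (Y ω) x) μ := by
  refine .of_bound (measurable_disagreement hX hY x).aestronglyMeasurable 1
    (ae_of_all _ fun ω => ?_)
  rw [Real.norm_of_nonneg (disagreement_nonneg _ _ _)]
  exact disagreement_le_one _ _ _

theorem integral_disagreement_le {ι : Type*} {X Y : Ω → ι → ℕ} (hX : Measurable X)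
    (hY : Measurable Y) {K : ℕ} (hord : ∀ᵐ ω ∂μ, ∀ x, X ω x ≤ Y ω x)
    (hbound : ∀ᵐ ω ∂μ, ∀ x, Y ω x ≤ K) (x : ι) :
    ∫ ω, disagreement (X ω) (Y ω) x ∂μ ≤ ∫ ω, |(X ω x : ℝ) - Y ω x| ∂μ := by
  have hXx : Measurable fun ω => (X ω x : ℝ) := by fun_prop
  have hYx : Measurable fun ω => (Y ω x : ℝ) := by fun_prop
  have hdiff_le : ∀ᵐ ω ∂μ, ‖|(X ω x : ℝ) - Y ω x|‖ ≤ K := by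
    filter_upwards [hord, hbound] with ω hle hK
    rw [norm_abs_eq_norm, Real.norm_eq_abs, abs_sub_comm]
    exact abs_sub_le_of_nonneg_of_le (Nat.cast_nonneg _) (by exact_mod_cast hK x)
      (Nat.cast_nonneg _) (by exact_mod_cast (hle x).trans (hK x))
  exact integral_mono (integrable_disagreement hX hY x)
    (.of_bound (hXx.sub hYx).abs.aestronglyMeasurable K hdiff_le)
    fun ω => disagreement_le_abs_sub (X ω) (Y ω) x

theorem abs_integral_microFlux_sub_le {p : ℤ → ℝ} {b : ℕ → ℕ → ℝ} {B : ℝ} (hp : ∀ z, 0 ≤ p z)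
    (hpsum : Summable fun z : ℤ => |(z : ℝ)| * p z)
    (hb0 : ∀ n m, 0 ≤ b n m) (hbB : ∀ n m, b n m ≤ B)
    {A : Ω → ℤ → ℝ} {X Y : Ω → ℤ → ℕ} (hA : Measurable A) (hX : Measurable X) (hY : Measurable Y)
    {a : ℝ} (ha : 0 ≤ a) (hα : ∀ᵐ ω ∂μ, |A ω 0| ≤ a) {K : ℕ}
    (hord : ∀ᵐ ω ∂μ, ∀ x, X ω x ≤ Y ω x) (hbound : ∀ᵐ ω ∂μ, ∀ x, Y ω x ≤ K)
    {r : ℝ} (hcoupl : ∀ x, ∫ ω, |(X ω x : ℝ) - Y ω x| ∂μ ≤ r) :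
    |∫ ω, microFlux p b (A ω) (X ω) ∂μ - ∫ ω, microFlux p b (A ω) (Y ω) ∂μ| ≤
      2 * a * B * (∑' z : ℤ, |(z : ℝ)| * p z) * r := by
  set S := ∑' z : ℤ, |(z : ℝ)| * p z
  have hB : 0 ≤ B := (hb0 0 0).trans (hbB 0 0)
  have haB : 0 ≤ a * B := mul_nonneg ha hB
  have hw0 (z : ℤ) : 0 ≤ |(z : ℝ)| * p z := mul_nonneg (abs_nonneg _) (hp z)
  set D : ℤ → Ω → ℝ := fun z ω => disagreement (X ω) (Y ω) 0 + disagreement (X ω) (Y ω) z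
  have hD_meas (z : ℤ) : Measurable (D z) :=
    (measurable_disagreement hX hY 0).add (measurable_disagreement hX hY z)
  have hD0 (z : ℤ) (ω : Ω) : 0 ≤ D z ω :=
    add_nonneg (disagreement_nonneg _ _ _) (disagreement_nonneg _ _ _)
  have hD2 (z : ℤ) (ω : Ω) : D z ω ≤ 2 := by
    linarith [disagreement_le_one (X ω) (Y ω) 0, disagreement_le_one (X ω) (Y ω) z]
  have hD_int (z : ℤ) : ∫ ω, D z ω ∂μ ≤ 2 * r := by
    have h0 := (integral_disagreement_le hX hY hord hbound 0).trans (hcoupl 0)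
    have hz := (integral_disagreement_le hX hY hord hbound z).trans (hcoupl z)
    rw [integral_add (integrable_disagreement hX hY 0) (integrable_disagreement hX hY z)]
    linarith
  have hF_int {Z : Ω → ℤ → ℕ} (hZ : Measurable Z) :
      Integrable (fun ω => microFlux p b (A ω) (Z ω)) μ := by
    refine .of_bound ((measurable_microFlux (summable_flux_term hp hpsum hb0 hbB)).comp
      (hA.prodMk hZ)).aestronglyMeasurable (a * (B * S)) ?_
    filter_upwards [hα] with ω hω
    exact (abs_microFlux_le hp hpsum hb0 hbB _ _).trans
      (mul_le_mul_of_nonneg_right hω (mul_nonneg hB (tsum_nonneg hw0)))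
  calc |∫ ω, microFlux p b (A ω) (X ω) ∂μ - ∫ ω, microFlux p b (A ω) (Y ω) ∂μ|
      = |∫ ω, microFlux p b (A ω) (X ω) - microFlux p b (A ω) (Y ω) ∂μ| := by
        rw [integral_sub (hF_int hX) (hF_int hY)]
    _ ≤ ∫ ω, |microFlux p b (A ω) (X ω) - microFlux p b (A ω) (Y ω)| ∂μ :=
        abs_integral_le_integral_abs
    _ ≤ ∫ ω, a * B * ∑' z : ℤ, |(z : ℝ)| * p z * D z ω ∂μ := by
        refine integral_mono_ae ((hF_int hX).sub (hF_int hY)).abs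
          ((integrable_tsum_mul hw0 hpsum hD_meas hD0 hD2).const_mul _) ?_
        filter_upwards [hα] with ω hω
        exact (abs_microFlux_sub_le hp hpsum hb0 hbB _ _ _).trans <|
          mul_le_mul_of_nonneg_right (mul_le_mul_of_nonneg_right hω hB)
            (tsum_nonneg fun z => mul_nonneg (hw0 z) (hD0 z ω))
    _ = a * B * ∫ ω, ∑' z : ℤ, |(z : ℝ)| * p z * D z ω ∂μ := integral_const_mul _ _
    _ ≤ a * B * (S * (2 * r)) :=
        mul_le_mul_of_nonneg_left (integral_tsum_mul_le hw0 hpsum hD_meas hD0 hD2 hD_int) haB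
    _ = 2 * a * B * S * r := by ring

end coupling

theorem flux_lipschitz_general
    (K : ℕ) (c B : ℝ) (hc : 0 < c)
    (p : ℤ → ℝ) (hp : ∀ z, 0 ≤ p z)
    (hpsum : Summable fun z : ℤ => |(z : ℝ)| * p z)
    (b : ℕ → ℕ → ℝ) (hbnonneg : ∀ n m, 0 ≤ b n m) (hbB : ∀ n m, b n m ≤ B)
    (ν ν' : Measure ((ℤ → ℝ) × (ℤ → ℕ)))
    (νc : Measure ((ℤ → ℝ) × (ℤ → ℕ) × (ℤ → ℕ))) [IsProbabilityMeasure νc]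
    (hmarg1 : νc.map (fun q => (q.1, q.2.1)) = ν)
    (hmarg2 : νc.map (fun q => (q.1, q.2.2)) = ν')
    (hαbound : ∀ᵐ q ∂νc, ∀ x : ℤ, c ≤ q.1 x ∧ q.1 x ≤ c⁻¹)
    (hord : ∀ᵐ q ∂νc, ∀ y : ℤ, q.2.1 y ≤ q.2.2 y)
    (hbound : ∀ᵐ q ∂νc, ∀ y : ℤ, q.2.2 y ≤ K)
    (ρ ρ' : ℝ)
    (hcoupl : ∀ x : ℤ, ∫ q, |(q.2.1 x : ℝ) - (q.2.2 x : ℝ)| ∂νc = ρ' - ρ) :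
    |(∫ q, microFlux p b q.1 q.2 ∂ν) - ∫ q, microFlux p b q.1 q.2 ∂ν'| ≤
      (2 * c⁻¹ * B * ∑' z : ℤ, |(z : ℝ)| * p z) * |ρ - ρ'| := by
  have hflux := measurable_microFlux (summable_flux_term hp hpsum hbnonneg hbB)
  have hα : ∀ᵐ q ∂νc, |q.1 0| ≤ c⁻¹ := by
    filter_upwards [hαbound] with q hq
    exact abs_le.2 ⟨by linarith [(hq 0).1, inv_pos.2 hc], (hq 0).2⟩
  have hρ : |ρ - ρ'| = ρ' - ρ := by
    rw [abs_sub_comm, abs_of_nonneg (hcoupl 0 ▸ integral_nonneg fun q => abs_nonneg _)]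
  rw [← hmarg1, ← hmarg2, integral_map (by fun_prop) hflux.aestronglyMeasurable,
    integral_map (by fun_prop) hflux.aestronglyMeasurable, hρ]
  exact abs_integral_microFlux_sub_le hp hpsum hbnonneg hbB measurable_fst (by fun_prop)
    (by fun_prop) (inv_nonneg.2 hc.le) hα hord hbound (fun x => (hcoupl x).le)

/-- Let `G(ρ) = ∫ j̃ dν^ρ` and `G(ρ') = ∫ j̃ dν^{ρ'}` with
`ρ ≤ ρ'`, and suppose there is a coupling `ν̄` of `ν^ρ` and `ν^{ρ'}` supported
on ordered pairs with `∫ |η(x) − ξ(x)| dν̄ = ρ' − ρ` for all `x`.  If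
`Σ_z |z| p(z) < ∞`, `c ≤ α(0) ≤ c⁻¹` and `0 ≤ b ≤ B`, then
`|G(ρ) − G(ρ')| ≤ V |ρ − ρ'|` with `V = 2 c⁻¹ B Σ_z |z| p(z)`. -/
theorem flux_lipschitz
    (K : ℕ) (c B : ℝ) (hc : 0 < c) (hB : 0 ≤ B)
    (p : ℤ → ℝ) (hp : ∀ z, 0 ≤ p z)
    (hpsum : Summable fun z : ℤ => |(z : ℝ)| * p z)
    (b : ℕ → ℕ → ℝ) (hbnonneg : ∀ n m, 0 ≤ b n m) (hbB : ∀ n m, b n m ≤ B)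
    (ν ν' : Measure ((ℤ → ℝ) × (ℤ → ℕ)))
    [IsProbabilityMeasure ν] [IsProbabilityMeasure ν']
    (νc : Measure ((ℤ → ℝ) × (ℤ → ℕ) × (ℤ → ℕ))) [IsProbabilityMeasure νc]
    (hmarg1 : νc.map (fun q => (q.1, q.2.1)) = ν)
    (hmarg2 : νc.map (fun q => (q.1, q.2.2)) = ν')
    (hαbound : ∀ᵐ q ∂νc, ∀ x : ℤ, c ≤ q.1 x ∧ q.1 x ≤ c⁻¹)
    (hord : ∀ᵐ q ∂νc, ∀ y : ℤ, q.2.1 y ≤ q.2.2 y)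
    (hbound : ∀ᵐ q ∂νc, ∀ y : ℤ, q.2.2 y ≤ K)
    (ρ ρ' : ℝ) (hρ : ρ ≤ ρ')
    (hcoupl : ∀ x : ℤ, ∫ q, |(q.2.1 x : ℝ) - (q.2.2 x : ℝ)| ∂νc = ρ' - ρ) :
    |(∫ q, microFlux p b q.1 q.2 ∂ν) - ∫ q, microFlux p b q.1 q.2 ∂ν'| ≤
      (2 * c⁻¹ * B * ∑' z : ℤ, |(z : ℝ)| * p z) * |ρ - ρ'| :=
  flux_lipschitz_general K c B hc p hp hpsum b hbnonneg hbB ν ν' νc hmarg1 hmarg2 hαbound hord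
    hbound ρ ρ' hcoupl
end
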